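/- Let q : I → M_ν(ℂ) be a twice differentiable matrix-valued function on an interval I near 0 satisfying the Euler–Lagrange equation q̈ = E q̇ + F q, and define p := (1/2)A⁻¹q̇ + Bq on I. Then (q,p) satisfies the Hamiltonian equations q̇ = 2A(p − Bq) and ṗ = 2 ᵗB A (p − Bq) + 2Cq on I. -/

import Mathlib

open Matrix Set

attribute [local instance] Matrix.linftyOpNormedAddCommGroup Matrix.linftyOpNormedRing
  Matrix.linftyOpNormedAlgebra

noncomputable section

abbrev Mat (ν : ℕ) := Matrix (Fin ν) (Fin ν) ℂ

/-- `E(t) := Ȧ(t)A(t)⁻¹ + 2A(t)(ᵗB(t) − B(t))` (real time variable). -/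
def EcoefR {ν : ℕ} (A B : ℝ → Mat ν) (t : ℝ) : Mat ν :=
  deriv A t * (A t)⁻¹ + (2 : ℂ) • (A t * ((B t)ᵀ - B t))

/-- `F(t) := 4A(t)C(t) − 2A(t)Ḃ(t)` (real time variable). -/
def FcoefR {ν : ℕ} (A B C : ℝ → Mat ν) (t : ℝ) : Mat ν :=
  (4 : ℂ) • (A t * C t) - (2 : ℂ) • (A t * deriv B t)

/-- The conjugate momentum `p := (1/2)·A⁻¹·q̇ + B·q`. -/
def pmom {ν : ℕ} (A B : ℝ → Mat ν) (q : ℝ → Mat ν) (s : ℝ) : Mat ν :=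
  (2 : ℂ)⁻¹ • ((A s)⁻¹ * deriv q s) + B s * q s

/-!
Since `A` is invertible, `2A(p - Bq) = q̇` is just the definition of `p`. Differentiating `p`
with `(A⁻¹)˙ = -A⁻¹ȦA⁻¹` and substituting the Euler–Lagrange equation for `q̈`, the `Ȧ`-terms
cancel against each other, as do `Ḃq` and `Bq̇`, leaving `ṗ = ᵗBq̇ + 2Cq = 2ᵗBA(p - Bq) + 2Cq`.
-/

theorem HasDerivAt.ringInverse {𝕜 R : Type*} [NontriviallyNormedField 𝕜] [NormedRing R]
    [HasSummableGeomSeries R] [NormedAlgebra 𝕜 R] {f : 𝕜 → R} {f' : R} {x : 𝕜}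
    (hf : HasDerivAt f f' x) (hx : IsUnit (f x)) :
    HasDerivAt (fun t => Ring.inverse (f t))
      (-(Ring.inverse (f x) * f' * Ring.inverse (f x))) x := by
  obtain ⟨u, hu⟩ := hx
  have := (hu ▸ hasFDerivAt_ringInverse (𝕜 := 𝕜) u).comp_hasDerivAt x hf
  simp only [← hu, Ring.inverse_unit] at this ⊢
  exact this

theorem Matrix.hasDerivAt_nonsing_inv {𝕜 n : Type*} [RCLike 𝕜] [Fintype n] [DecidableEq n]
    {A : ℝ → Matrix n n 𝕜} {A' : Matrix n n 𝕜} {x : ℝ} (hA : HasDerivAt A A' x)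
    (hx : IsUnit (A x)) :
    HasDerivAt (fun t => (A t)⁻¹) (-((A x)⁻¹ * A' * (A x)⁻¹)) x := by
  have := hA.ringInverse hx
  simp only [← Matrix.nonsing_inv_eq_ringInverse] at this
  -- not `simpa`: the `linfty` topology on matrices is the product one only up to unfolding
  exact this

section Momentum

variable {ν : ℕ} {A B C q : ℝ → Mat ν} {s : ℝ}

theorem two_smul_mul_pmom_sub_mul (hAs : IsUnit (A s)) :
    (2 : ℂ) • (A s * (pmom A B q s - B s * q s)) = deriv q s := by
  rw [pmom, add_sub_cancel_right, mul_smul_comm, smul_smul, ← mul_assoc,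
    Matrix.mul_nonsing_inv _ ((Matrix.isUnit_iff_isUnit_det _).mp hAs), one_mul]
  norm_num

theorem hasDerivAt_pmom (hA : DifferentiableAt ℝ A s) (hB : DifferentiableAt ℝ B s)
    (hAs : IsUnit (A s)) (hq : DifferentiableAt ℝ q s)
    (hq' : DifferentiableAt ℝ (deriv q) s) :
    HasDerivAt (pmom A B q)
      ((2 : ℂ)⁻¹ • (-((A s)⁻¹ * deriv A s * (A s)⁻¹) * deriv q s
          + (A s)⁻¹ * deriv (deriv q) s)
        + (deriv B s * q s + B s * deriv q s)) s := by
  have := (((Matrix.hasDerivAt_nonsing_inv hA.hasDerivAt hAs).mul hq'.hasDerivAt).const_smul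
    (2 : ℂ)⁻¹).add (hB.hasDerivAt.mul hq.hasDerivAt)
  exact this

theorem deriv_pmom_of_eulerLagrange (hA : DifferentiableAt ℝ A s)
    (hB : DifferentiableAt ℝ B s) (hAs : IsUnit (A s)) (hq : DifferentiableAt ℝ q s)
    (hq' : DifferentiableAt ℝ (deriv q) s)
    (hEL : deriv (deriv q) s = EcoefR A B s * deriv q s + FcoefR A B C s * q s) :
    deriv (pmom A B q) s = (B s)ᵀ * deriv q s + (2 : ℂ) • (C s * q s) := by
  have hinv : (A s)⁻¹ * A s = 1 :=
    Matrix.nonsing_inv_mul _ ((Matrix.isUnit_iff_isUnit_det _).mp hAs)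
  refine (hasDerivAt_pmom hA hB hAs hq hq').deriv.trans ?_
  rw [hEL, EcoefR, FcoefR]
  simp only [mul_add, add_mul, mul_sub, sub_mul, mul_smul_comm, smul_mul_assoc,
    smul_add, smul_sub, smul_smul, neg_mul, ← mul_assoc, hinv, one_mul]
  module

end Momentum

theorem statement4_general (ν : ℕ) (A B C : ℝ → Mat ν)
    (U : Set ℝ)
    (hA : AnalyticOnNhd ℝ A U) (hB : AnalyticOnNhd ℝ B U)
    (hAinv : ∀ t ∈ U, IsUnit (A t))
    (I : Set ℝ) (hIU : I ⊆ U)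
    (q : ℝ → Mat ν)
    (hq1 : ∀ s ∈ I, DifferentiableAt ℝ q s)
    (hq2 : ∀ s ∈ I, DifferentiableAt ℝ (deriv q) s)
    (hEL : ∀ s ∈ I, deriv (deriv q) s = EcoefR A B s * deriv q s + FcoefR A B C s * q s) :
    ∀ s ∈ I,
      deriv q s = (2 : ℂ) • (A s * (pmom A B q s - B s * q s)) ∧
      deriv (pmom A B q) s =
        (2 : ℂ) • ((B s)ᵀ * (A s * (pmom A B q s - B s * q s)))
          + (2 : ℂ) • (C s * q s) := by
  intro s hs
  have hsU := hIU hs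
  have hvel := two_smul_mul_pmom_sub_mul (B := B) (q := q) (hAinv s hsU)
  refine ⟨hvel.symm, ?_⟩
  rw [← mul_smul_comm, hvel]
  exact deriv_pmom_of_eulerLagrange (hA s hsU).differentiableAt (hB s hsU).differentiableAt
    (hAinv s hsU) (hq1 s hs) (hq2 s hs) (hEL s hs)

theorem statement4 (ν : ℕ) (hν : 1 ≤ ν) (A B C : ℝ → Mat ν)
    (U : Set ℝ) (hU : U ∈ nhds (0 : ℝ)) (hUopen : IsOpen U)
    (hA : AnalyticOnNhd ℝ A U) (hB : AnalyticOnNhd ℝ B U) (hC : AnalyticOnNhd ℝ C U)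
    (hAsymm : ∀ t ∈ U, (A t).IsSymm) (hCsymm : ∀ t ∈ U, (C t).IsSymm)
    (hAinv : ∀ t ∈ U, IsUnit (A t))
    (I : Set ℝ) (hIU : I ⊆ U) (hIopen : IsOpen I) (hI0 : (0 : ℝ) ∈ I)
    (q : ℝ → Mat ν)
    (hq1 : ∀ s ∈ I, DifferentiableAt ℝ q s)
    (hq2 : ∀ s ∈ I, DifferentiableAt ℝ (deriv q) s)
    (hEL : ∀ s ∈ I, deriv (deriv q) s = EcoefR A B s * deriv q s + FcoefR A B C s * q s) :
    ∀ s ∈ I,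
      deriv q s = (2 : ℂ) • (A s * (pmom A B q s - B s * q s)) ∧
      deriv (pmom A B q) s =
        (2 : ℂ) • ((B s)ᵀ * (A s * (pmom A B q s - B s * q s)))
          + (2 : ℂ) • (C s * q s) :=
  statement4_general ν A B C U hA hB hAinv I hIU q hq1 hq2 hEL
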